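/- Let d ≥ 1 and β > 0. There is a constant C = C(d,β) > 0 such that for all x, y ∈ ℝ^d with x ≠ y and |x−y|·|x| ≤ d, one has I(x,y) ≤ C |x| / |x−y|^{d−1}, where I(x,y) = ∫₀¹ (−log √(1−u))^{β/2} u^{−(d/2+1)} e^{−|y−√(1−u)x|²/u} · |y−√(1−u)x| |x| (1−u)^{−1/2} du. -/

import Mathlib

open MeasureTheory Set

lemma myPow_le_factorial_mul_exp (n : ℕ) {x : ℝ} (hx : 0 ≤ x) :
    x ^ n ≤ (n.factorial : ℝ) * Real.exp x := by
  have h := Real.sum_le_exp_of_nonneg hx (n + 1)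
  have h2 : x ^ n / (n.factorial:ℝ) ≤ ∑ i ∈ Finset.range (n + 1), x ^ i / (i.factorial:ℝ) := by
    exact Finset.single_le_sum (f := fun i => x ^ i / (i.factorial : ℝ))
      (fun i _ => by positivity) (Finset.self_mem_range_succ n)
  have hn : (0:ℝ) < (n.factorial : ℝ) := by positivity
  rw [div_le_iff₀ hn] at h2
  calc x ^ n ≤ (∑ i ∈ Finset.range (n + 1), x ^ i / (i.factorial:ℝ)) * (n.factorial:ℝ) := h2
    _ ≤ Real.exp x * (n.factorial:ℝ) := by gcongr
    _ = (n.factorial : ℝ) * Real.exp x := mul_comm _ _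

lemma myPow_mul_exp_neg_sq_le (n : ℕ) {v : ℝ} (hv : 0 ≤ v) :
    v ^ n * Real.exp (-(v ^ 2)) ≤ (n.factorial : ℝ) := by
  rcases le_total v 1 with h | h
  · have h1 : v ^ n ≤ 1 := pow_le_one₀ hv h
    have h2 : Real.exp (-(v ^ 2)) ≤ 1 := Real.exp_le_one_iff.mpr (by nlinarith [sq_nonneg v])
    have : v ^ n * Real.exp (-(v ^ 2)) ≤ 1 := by
      calc v ^ n * Real.exp (-(v ^ 2)) ≤ 1 * 1 := by
            apply mul_le_mul h1 h2 (Real.exp_nonneg _) zero_le_one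
        _ = 1 := by ring
    exact this.trans (by exact_mod_cast Nat.one_le_cast.mpr n.factorial_pos)
  · have h1 : v ^ n ≤ (n.factorial : ℝ) * Real.exp v := myPow_le_factorial_mul_exp n hv
    have h2 : v ≤ v ^ 2 := by nlinarith
    calc v ^ n * Real.exp (-(v ^ 2)) ≤ (n.factorial : ℝ) * Real.exp v * Real.exp (-(v ^ 2)) := by
          gcongr
      _ = (n.factorial:ℝ) * Real.exp (v - v ^ 2) := by rw [mul_assoc, ← Real.exp_add]; ring_nf
      _ ≤ (n.factorial:ℝ) * Real.exp 0 := by gcongr; linarith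
      _ = (n.factorial:ℝ) := by simp

lemma myLog_envelope (β : ℝ) (hβ : 0 < β) :
    ∃ K : ℝ, 0 < K ∧ ∀ u ∈ Ioo (0:ℝ) 1,
      (-Real.log (Real.sqrt (1 - u))) ^ (β/2) ≤
        K * u ^ (min β (1/4) / 2) * (1 - u) ^ (-(1/4) : ℝ) := by
  set γ := min β (1/4) / 2 with hγdef
  have hγ0 : 0 < γ := by
    have : 0 < min β (1/4) := lt_min hβ (by norm_num)
    positivity
  have hγ8 : γ ≤ 1/8 := by
    have : min β (1/4) ≤ 1/4 := min_le_right _ _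
    rw [hγdef]; linarith
  have hγβ : γ ≤ β/2 := by
    have : min β (1/4) ≤ β := min_le_left _ _
    rw [hγdef]; linarith
  set p := β/2 - γ with hpdef
  have hp : 0 ≤ p := by rw [hpdef]; linarith
  have key : ∃ K2 : ℝ, 0 < K2 ∧ ∀ u ∈ Ioo (0:ℝ) 1,
      (-Real.log (1 - u)) ^ p ≤ K2 * (1 - u) ^ (-(1/8) : ℝ) := by
    rcases eq_or_lt_of_le hp with hp0 | hp0
    · refine ⟨1, one_pos, fun u hu => ?_⟩
      have h1u : 0 < 1 - u := by linarith [hu.2]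
      rw [← hp0, Real.rpow_zero, one_mul]
      calc (1:ℝ) = (1-u) ^ (0:ℝ) := (Real.rpow_zero _).symm
        _ ≤ (1-u) ^ (-(1/8) : ℝ) :=
          Real.rpow_le_rpow_of_exponent_ge h1u (by linarith [hu.1]) (by norm_num)
    · refine ⟨(8*p) ^ p, Real.rpow_pos_of_pos (by linarith) _, fun u hu => ?_⟩
      have h1u : 0 < 1 - u := by linarith [hu.2]
      have hw : (0:ℝ) < (1-u)⁻¹ := by positivity
      have hε : (0:ℝ) < 1/(8*p) := by positivity
      have hlog : -Real.log (1-u) = Real.log ((1-u)⁻¹) := (Real.log_inv _).symm ▸ rfl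
      have hb : Real.log ((1-u)⁻¹) ≤ 8*p * ((1-u)⁻¹) ^ (1/(8*p) : ℝ) := by
        have := Real.log_le_rpow_div hw.le hε
        calc Real.log ((1-u)⁻¹) ≤ ((1-u)⁻¹) ^ (1/(8*p) : ℝ) / (1/(8*p)) := this
          _ = 8*p * ((1-u)⁻¹) ^ (1/(8*p) : ℝ) := by field_simp
      have hlognn : 0 ≤ -Real.log (1-u) := by
        have := Real.log_nonpos h1u.le (by linarith [hu.1])
        linarith
      have step : (-Real.log (1-u)) ^ p ≤ (8*p * ((1-u)⁻¹) ^ (1/(8*p) : ℝ)) ^ p := by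
        exact Real.rpow_le_rpow hlognn (by rw [hlog]; exact hb) hp
      refine step.trans ?_
      have hxnn : (0:ℝ) ≤ 8*p := by linarith
      have hynn : (0:ℝ) ≤ ((1-u)⁻¹) ^ (1/(8*p) : ℝ) := Real.rpow_nonneg hw.le _
      rw [Real.mul_rpow hxnn hynn, ← Real.rpow_mul hw.le]
      have : (1/(8*p)) * p = 1/8 := by field_simp
      rw [this]
      have : ((1-u)⁻¹) ^ (1/8 : ℝ) = (1-u) ^ (-(1/8) : ℝ) := by
        rw [← Real.rpow_neg_one, ← Real.rpow_mul h1u.le]; norm_num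
      rw [this]
  obtain ⟨K2, hK2, hkey⟩ := key
  refine ⟨K2, hK2, fun u hu => ?_⟩
  have h1u : 0 < 1 - u := by linarith [hu.2]
  have h1u1 : 1 - u ≤ 1 := by linarith [hu.1]
  have hlogs : Real.log (Real.sqrt (1-u)) = Real.log (1-u) / 2 := Real.log_sqrt h1u.le
  set t := -Real.log (1-u) with htdef
  have ht0 : 0 < t := by
    have := Real.log_neg h1u (by linarith [hu.1])
    rw [htdef]; linarith
  have hβ2 : (0:ℝ) ≤ β/2 := by linarith
  have base : -Real.log (Real.sqrt (1-u)) = t/2 := by rw [hlogs, htdef]; ring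
  have htle : t ≤ u/(1-u) := by
    have h := Real.log_le_sub_one_of_pos (show (0:ℝ) < (1-u)⁻¹ by positivity)
    rw [Real.log_inv] at h
    have heq : (1-u)⁻¹ - 1 = u/(1-u) := by field_simp; ring
    rw [htdef]; linarith [heq ▸ h]
  have hAA : (1-u) ^ (-(1/8):ℝ) * (1-u) ^ (-(1/8):ℝ) = (1-u) ^ (-(1/4):ℝ) := by
    rw [← Real.rpow_add h1u]; norm_num
  have hstep1 : t ^ γ ≤ u ^ γ * (1-u) ^ (-(1/8):ℝ) := by
    calc t ^ γ ≤ (u/(1-u)) ^ γ := Real.rpow_le_rpow ht0.le htle hγ0.le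
      _ = u ^ γ * (1-u) ^ (-γ) := by
          rw [Real.div_rpow hu.1.le h1u.le, Real.rpow_neg h1u.le, div_eq_mul_inv]
      _ ≤ u ^ γ * (1-u) ^ (-(1/8):ℝ) := by
          apply mul_le_mul_of_nonneg_left _ (Real.rpow_nonneg hu.1.le γ)
          exact Real.rpow_le_rpow_of_exponent_ge h1u h1u1 (by linarith)
  have hstep2 : t ^ p ≤ K2 * (1-u) ^ (-(1/8):ℝ) := hkey u hu
  calc (-Real.log (Real.sqrt (1-u))) ^ (β/2) = (t/2) ^ (β/2) := by rw [base]
    _ ≤ t ^ (β/2) := Real.rpow_le_rpow (by positivity) (half_le_self ht0.le) hβ2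
    _ = t ^ γ * t ^ p := by rw [← Real.rpow_add ht0]; congr 1; rw [hpdef]; ring
    _ ≤ (u ^ γ * (1-u) ^ (-(1/8):ℝ)) * (K2 * (1-u) ^ (-(1/8):ℝ)) := by
        exact mul_le_mul hstep1 hstep2 (Real.rpow_nonneg ht0.le _)
          (mul_nonneg (Real.rpow_nonneg hu.1.le _) (Real.rpow_nonneg h1u.le _))
    _ = K2 * u ^ γ * ((1-u) ^ (-(1/8):ℝ) * (1-u) ^ (-(1/8):ℝ)) := by ring
    _ = K2 * u ^ γ * (1-u) ^ (-(1/4):ℝ) := by rw [hAA]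

lemma myIntegrable (γ : ℝ) (hγ0 : 0 < γ) (hγ1 : γ ≤ 1) :
    IntegrableOn (fun u : ℝ => u ^ (γ - 1) * (1 - u) ^ (-(3/4) : ℝ)) (Ioo 0 1) := by
  have hI1 : IntegrableOn (fun u : ℝ => u ^ (γ - 1)) (Ioo 0 1) := by
    have h := (intervalIntegral.intervalIntegrable_rpow'
      (show (-1:ℝ) < γ - 1 by linarith) (a := 0) (b := 1)).1
    exact h.mono_set Ioo_subset_Ioc_self
  have hI2 : IntegrableOn (fun u : ℝ => (1 - u) ^ (-(3/4) : ℝ)) (Ioo 0 1) := by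
    have h := (intervalIntegral.intervalIntegrable_rpow'
      (show (-1:ℝ) < -(3/4) by norm_num) (a := 0) (b := 1))
    have h2 := h.comp_sub_left 1
    norm_num at h2
    exact h2.symm.1.mono_set Ioo_subset_Ioc_self
  have hpow2 : ∀ w : ℝ, -1 ≤ w → ((1:ℝ)/2) ^ w ≤ 2 := by
    intro w hw
    have h1 : ((1:ℝ)/2) ^ w = 2 ^ (-w) := by
      rw [one_div, Real.inv_rpow (by norm_num), ← Real.rpow_neg (by norm_num)]
    rw [h1]
    calc (2:ℝ) ^ (-w) ≤ 2 ^ (1:ℝ) :=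
        Real.rpow_le_rpow_of_exponent_le one_le_two (by linarith)
      _ = 2 := Real.rpow_one 2
  have hmeas : AEStronglyMeasurable (fun u : ℝ => u ^ (γ-1) * (1-u) ^ (-(3/4):ℝ))
      (volume.restrict (Ioo 0 1)) := by
    apply ContinuousOn.aestronglyMeasurable _ measurableSet_Ioo
    apply ContinuousOn.mul
    · intro u hu
      exact (Real.continuousAt_rpow_const u (γ-1) (Or.inl (ne_of_gt hu.1))).continuousWithinAt
    · intro u hu
      have h1u : (1:ℝ) - u ≠ 0 := ne_of_gt (by linarith [hu.2])
      exact ((Real.continuousAt_rpow_const (1-u) (-(3/4)) (Or.inl h1u)).comp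
        ((continuous_const.sub continuous_id).continuousAt)).continuousWithinAt
  apply Integrable.mono' ((hI1.const_mul 2).add (hI2.const_mul 2)) hmeas
  rw [ae_restrict_iff' measurableSet_Ioo]
  filter_upwards with u hu
  have hu0 : 0 < u := hu.1
  have h1u : 0 < 1 - u := by linarith [hu.2]
  have hn1 : 0 ≤ u ^ (γ-1) := Real.rpow_nonneg hu0.le _
  have hn2 : 0 ≤ (1-u) ^ (-(3/4):ℝ) := Real.rpow_nonneg h1u.le _
  rw [Real.norm_eq_abs, abs_of_nonneg (mul_nonneg hn1 hn2)]
  rcases le_total u (1/2) with hc | hc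
  · have hb : (1-u) ^ (-(3/4):ℝ) ≤ 2 := by
      calc (1-u) ^ (-(3/4):ℝ) ≤ ((1:ℝ)/2) ^ (-(3/4):ℝ) :=
          Real.rpow_le_rpow_of_nonpos (by norm_num) (by linarith) (by norm_num)
        _ ≤ 2 := hpow2 _ (by norm_num)
    calc u ^ (γ-1) * (1-u) ^ (-(3/4):ℝ) ≤ u ^ (γ-1) * 2 := by
          exact mul_le_mul_of_nonneg_left hb hn1
      _ = 2 * u ^ (γ-1) := by ring
      _ ≤ 2 * u ^ (γ-1) + 2 * (1-u) ^ (-(3/4):ℝ) := by linarith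
  · have hb : u ^ (γ-1) ≤ 2 := by
      calc u ^ (γ-1) ≤ ((1:ℝ)/2) ^ (γ-1) :=
          Real.rpow_le_rpow_of_nonpos (by norm_num) (by linarith) (by linarith)
        _ ≤ 2 := hpow2 _ (by linarith)
    calc u ^ (γ-1) * (1-u) ^ (-(3/4):ℝ) ≤ 2 * (1-u) ^ (-(3/4):ℝ) := by
          exact mul_le_mul_of_nonneg_right hb hn2
      _ ≤ 2 * u ^ (γ-1) + 2 * (1-u) ^ (-(3/4):ℝ) := by linarith

lemma myCore (d : ℕ) (hd : 1 ≤ d) {u r a b : ℝ} (hu : u ∈ Ioo (0:ℝ) 1) (hr : 0 ≤ r)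
    (ha : 0 < a) (hb : 0 ≤ b) (htri : a ≤ r + u * b) (hab : a * b ≤ d) :
    u ^ (-((d:ℝ)/2 + 1)) * Real.exp (-r ^ 2 / u) * r ≤
      ((d.factorial : ℝ) * 2 ^ (d-1) + Real.sqrt (2*d) ^ (d-1)) / a ^ (d-1) * u ^ (-(1:ℝ)) := by
  obtain ⟨hu0, hu1⟩ := hu
  have hsu : 0 < Real.sqrt u := Real.sqrt_pos.mpr hu0
  set v := r / Real.sqrt u with hvdef
  have hv : 0 ≤ v := div_nonneg hr hsu.le
  have hv2 : v ^ 2 = r ^ 2 / u := by rw [hvdef, div_pow, Real.sq_sqrt hu0.le]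
  have hE : Real.exp (-r ^ 2 / u) = Real.exp (-(v ^ 2)) := by rw [hv2, neg_div]
  have hup : 0 < u ^ (-((d:ℝ)/2 + 1)) := Real.rpow_pos_of_pos hu0 _
  have hS : 0 ≤ Real.sqrt (2*d) ^ (d-1) := pow_nonneg (Real.sqrt_nonneg _) _
  have hF : (0:ℝ) < d.factorial * 2 ^ (d-1) := by positivity
  have hadm : (0:ℝ) < a ^ (d-1) := pow_pos ha _
  have hum : (0:ℝ) < u ^ (-(1:ℝ)) := Real.rpow_pos_of_pos hu0 _
  have hsqd : (Real.sqrt u) ^ d = u ^ ((d:ℝ)/2) := by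
    rw [Real.sqrt_eq_rpow, ← Real.rpow_natCast (u ^ ((1:ℝ)/2)) d, ← Real.rpow_mul hu0.le]
    congr 1; ring
  rcases le_or_gt (a/2) r with hcase | hcase
  · -- Case A : r ≥ a/2
    have hrpos : 0 < r := lt_of_lt_of_le (by linarith) hcase
    have hvd := myPow_mul_exp_neg_sq_le d hv
    have hvne : (Real.sqrt u) ^ d ≠ 0 := by positivity
    have hrd : r ^ d = r ^ (d-1) * r := by
      rw [← pow_succ]; congr 1; omega
    have hid : u ^ (-((d:ℝ)/2 + 1)) * Real.exp (-(v ^ 2)) * r =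
        (v ^ d * Real.exp (-(v ^ 2))) *
          (u ^ (-((d:ℝ)/2 + 1)) * (Real.sqrt u) ^ d * (r / r ^ d)) := by
      rw [hvdef, div_pow]
      field_simp
      rw [← mul_pow, div_mul_cancel₀ _ hsu.ne']
    have hP : 0 ≤ u ^ (-((d:ℝ)/2 + 1)) * (Real.sqrt u) ^ d * (r / r ^ d) := by positivity
    have hexp : u ^ (-((d:ℝ)/2 + 1)) * (Real.sqrt u) ^ d = u ^ (-(1:ℝ)) := by
      rw [hsqd, ← Real.rpow_add hu0]; congr 1; ring
    have hrr : r / r ^ d ≤ 2 ^ (d-1) / a ^ (d-1) := by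
      have h1 : r / r ^ d = 1 / r ^ (d-1) := by
        rw [hrd]; field_simp
      have h2 : (a/2) ^ (d-1) ≤ r ^ (d-1) := pow_le_pow_left₀ (by linarith) hcase _
      have h3 : (0:ℝ) < (a/2) ^ (d-1) := by positivity
      rw [h1]
      calc (1:ℝ) / r ^ (d-1) ≤ 1 / (a/2) ^ (d-1) := one_div_le_one_div_of_le h3 h2
        _ = 2 ^ (d-1) / a ^ (d-1) := by rw [div_pow]; field_simp
    calc u ^ (-((d:ℝ)/2 + 1)) * Real.exp (-r ^ 2 / u) * r
        = (v ^ d * Real.exp (-(v ^ 2))) *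
          (u ^ (-((d:ℝ)/2 + 1)) * (Real.sqrt u) ^ d * (r / r ^ d)) := by rw [hE, hid]
      _ ≤ (d.factorial : ℝ) * (u ^ (-((d:ℝ)/2 + 1)) * (Real.sqrt u) ^ d * (r / r ^ d)) := by
          exact mul_le_mul_of_nonneg_right hvd hP
      _ = (d.factorial : ℝ) * (r / r ^ d) * u ^ (-(1:ℝ)) := by
          rw [hexp]; ring
      _ ≤ (d.factorial : ℝ) * (2 ^ (d-1) / a ^ (d-1)) * u ^ (-(1:ℝ)) := by
          apply mul_le_mul_of_nonneg_right _ hum.le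
          exact mul_le_mul_of_nonneg_left hrr (by positivity)
      _ ≤ ((d.factorial : ℝ) * 2 ^ (d-1) + Real.sqrt (2*d) ^ (d-1)) / a ^ (d-1) * u ^ (-(1:ℝ)) := by
          apply mul_le_mul_of_nonneg_right _ hum.le
          rw [mul_div_assoc']
          gcongr
          linarith
  · -- Case B : r < a/2
    have hub : a/2 < u * b := by nlinarith
    have hb0 : 0 < b := by nlinarith
    have hu_ge : a/(2*b) ≤ u := by
      rw [div_le_iff₀ (by positivity)]; nlinarith
    have hv1 := myPow_mul_exp_neg_sq_le 1 hv
    rw [pow_one, Nat.factorial_one, Nat.cast_one] at hv1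
    have hEr : Real.exp (-r ^ 2 / u) * r ≤ Real.sqrt u := by
      have hrv : r = v * Real.sqrt u := by rw [hvdef, div_mul_cancel₀ _ hsu.ne']
      calc Real.exp (-r ^ 2 / u) * r = (v * Real.exp (-(v ^ 2))) * Real.sqrt u := by
            rw [hE, hrv]; ring
        _ ≤ 1 * Real.sqrt u := mul_le_mul_of_nonneg_right hv1 hsu.le
        _ = Real.sqrt u := one_mul _
    have hkey : u ^ (-((d:ℝ)/2 + 1)) * Real.sqrt u =
        (u ^ (-(1:ℝ)/2)) ^ (d-1) * u ^ (-(1:ℝ)) := by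
      rw [Real.sqrt_eq_rpow, ← Real.rpow_natCast (u ^ (-(1:ℝ)/2)) (d-1),
        ← Real.rpow_mul hu0.le, ← Real.rpow_add hu0, ← Real.rpow_add hu0]
      congr 1
      have : ((d-1 : ℕ) : ℝ) = (d:ℝ) - 1 := by
        rw [Nat.cast_sub hd, Nat.cast_one]
      rw [this]; ring
    have hbound : u ^ (-(1:ℝ)/2) ≤ Real.sqrt (2*d) / a := by
      have step1 : u ^ (-(1:ℝ)/2) ≤ (a/(2*b)) ^ (-(1:ℝ)/2) := by
        apply Real.rpow_le_rpow_of_nonpos (by positivity) hu_ge (by norm_num)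
      have step2 : (a/(2*b)) ^ (-(1:ℝ)/2) = Real.sqrt (2*b/a) := by
        rw [show (-(1:ℝ)/2) = -(1/2) by norm_num, Real.rpow_neg (by positivity),
          ← Real.sqrt_eq_rpow, ← Real.sqrt_inv, inv_div]
      have step3 : Real.sqrt (2*b/a) ≤ Real.sqrt (2*d) / a := by
        have harg : 2*b/a ≤ 2*d/a^2 := by
          rw [div_le_div_iff₀ ha (by positivity)]; nlinarith
        calc Real.sqrt (2*b/a) ≤ Real.sqrt (2*d/a^2) := Real.sqrt_le_sqrt harg
          _ = Real.sqrt (2*d) / a := by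
            rw [Real.sqrt_div (by positivity) (a^2), Real.sqrt_sq ha.le]
      rw [step2] at step1; exact step1.trans step3
    calc u ^ (-((d:ℝ)/2 + 1)) * Real.exp (-r ^ 2 / u) * r
        = u ^ (-((d:ℝ)/2 + 1)) * (Real.exp (-r ^ 2 / u) * r) := by ring
      _ ≤ u ^ (-((d:ℝ)/2 + 1)) * Real.sqrt u := mul_le_mul_of_nonneg_left hEr hup.le
      _ = (u ^ (-(1:ℝ)/2)) ^ (d-1) * u ^ (-(1:ℝ)) := hkey
      _ ≤ (Real.sqrt (2*d) / a) ^ (d-1) * u ^ (-(1:ℝ)) := by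
          apply mul_le_mul_of_nonneg_right _ hum.le
          exact pow_le_pow_left₀ (Real.rpow_nonneg hu0.le _) hbound _
      _ = Real.sqrt (2*d) ^ (d-1) / a ^ (d-1) * u ^ (-(1:ℝ)) := by rw [div_pow]
      _ ≤ ((d.factorial : ℝ) * 2 ^ (d-1) + Real.sqrt (2*d) ^ (d-1)) / a ^ (d-1) * u ^ (-(1:ℝ)) := by
          apply mul_le_mul_of_nonneg_right _ hum.le
          gcongr
          linarith

lemma myPointwise (d : ℕ) (hd : 1 ≤ d) (β γ K : ℝ) (hK : 0 ≤ K)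
    (hL : ∀ u ∈ Ioo (0:ℝ) 1, (-Real.log (Real.sqrt (1-u))) ^ (β/2) ≤
      K * u ^ γ * (1-u) ^ (-(1/4) : ℝ))
    {u r a b : ℝ} (hu : u ∈ Ioo (0:ℝ) 1) (hr : 0 ≤ r) (ha : 0 < a) (hb : 0 ≤ b)
    (htri : a ≤ r + u * b) (hab : a * b ≤ d) :
    (-Real.log (Real.sqrt (1-u))) ^ (β/2) * u ^ (-((d:ℝ)/2 + 1)) *
      Real.exp (-r ^ 2 / u) * (r * b * (1-u) ^ (-(1:ℝ)/2)) ≤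
    K * ((d.factorial : ℝ) * 2 ^ (d-1) + Real.sqrt (2*d) ^ (d-1)) * (b / a ^ (d-1)) *
      (u ^ (γ-1) * (1-u) ^ (-(3/4) : ℝ)) := by
  obtain ⟨hu0, hu1⟩ := hu
  have h1u : 0 < 1 - u := by linarith
  have hLnn : 0 ≤ -Real.log (Real.sqrt (1-u)) := by
    have := Real.log_nonpos (Real.sqrt_nonneg (1-u)) (Real.sqrt_le_one.mpr (by linarith))
    linarith
  have hLp : 0 ≤ (-Real.log (Real.sqrt (1-u))) ^ (β/2) := Real.rpow_nonneg hLnn _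
  have hcore := myCore d hd ⟨hu0, hu1⟩ hr ha hb htri hab
  have hcorenn : 0 ≤ u ^ (-((d:ℝ)/2 + 1)) * Real.exp (-r ^ 2 / u) * r :=
    mul_nonneg (mul_nonneg (Real.rpow_nonneg hu0.le _) (Real.exp_nonneg _)) hr
  have hLe := hL u ⟨hu0, hu1⟩
  have hLbnn : 0 ≤ K * u ^ γ * (1-u) ^ (-(1/4) : ℝ) :=
    mul_nonneg (mul_nonneg hK (Real.rpow_nonneg hu0.le _)) (Real.rpow_nonneg h1u.le _)
  have hw : 0 ≤ b * (1-u) ^ (-(1:ℝ)/2) := mul_nonneg hb (Real.rpow_nonneg h1u.le _)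
  have e1 : u ^ γ * u ^ (-(1:ℝ)) = u ^ (γ-1) := by
    rw [← Real.rpow_add hu0]; ring_nf
  have e2 : (1-u) ^ (-(1/4):ℝ) * (1-u) ^ (-(1:ℝ)/2) = (1-u) ^ (-(3/4):ℝ) := by
    rw [← Real.rpow_add h1u]; norm_num
  calc (-Real.log (Real.sqrt (1-u))) ^ (β/2) * u ^ (-((d:ℝ)/2 + 1)) *
      Real.exp (-r ^ 2 / u) * (r * b * (1-u) ^ (-(1:ℝ)/2))
      = ((-Real.log (Real.sqrt (1-u))) ^ (β/2) *
          (u ^ (-((d:ℝ)/2 + 1)) * Real.exp (-r ^ 2 / u) * r)) *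
          (b * (1-u) ^ (-(1:ℝ)/2)) := by ring
    _ ≤ ((K * u ^ γ * (1-u) ^ (-(1/4) : ℝ)) *
          (((d.factorial : ℝ) * 2 ^ (d-1) + Real.sqrt (2*d) ^ (d-1)) / a ^ (d-1) *
            u ^ (-(1:ℝ)))) * (b * (1-u) ^ (-(1:ℝ)/2)) := by
        apply mul_le_mul_of_nonneg_right _ hw
        exact mul_le_mul hLe hcore hcorenn hLbnn
    _ = K * ((d.factorial : ℝ) * 2 ^ (d-1) + Real.sqrt (2*d) ^ (d-1)) * (b / a ^ (d-1)) *
          ((u ^ γ * u ^ (-(1:ℝ))) * ((1-u) ^ (-(1/4):ℝ) * (1-u) ^ (-(1:ℝ)/2))) := by ring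
    _ = K * ((d.factorial : ℝ) * 2 ^ (d-1) + Real.sqrt (2*d) ^ (d-1)) * (b / a ^ (d-1)) *
          (u ^ (γ-1) * (1-u) ^ (-(3/4) : ℝ)) := by rw [e1, e2]

/-- The term `I(x,y)`. -/
noncomputable def termI (d : ℕ) (β : ℝ) (x y : EuclideanSpace ℝ (Fin d)) : ℝ :=
  ∫ u in Ioo (0:ℝ) 1,
    (-Real.log (Real.sqrt (1 - u))) ^ (β/2) * u ^ (-((d:ℝ)/2 + 1)) *
      Real.exp (-‖y - Real.sqrt (1 - u) • x‖ ^ 2 / u) *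
        (‖y - Real.sqrt (1 - u) • x‖ * ‖x‖ * (1 - u) ^ (-(1:ℝ)/2))

/-- On the local region `|x−y|·|x| ≤ d`, `I(x,y) ≤ C |x|/|x−y|^{d−1}`. -/
theorem termI_le (d : ℕ) (hd : 1 ≤ d) (β : ℝ) (hβ : 0 < β) :
    ∃ C : ℝ, 0 < C ∧ ∀ x y : EuclideanSpace ℝ (Fin d), x ≠ y →
      ‖x - y‖ * ‖x‖ ≤ (d : ℝ) →
      termI d β x y ≤ C * ‖x‖ / ‖x - y‖ ^ (d - 1) := by
  set γ := min β (1/4) / 2 with hγdef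
  have hγ0 : 0 < γ := by
    have := lt_min hβ (show (0:ℝ) < 1/4 by norm_num)
    rw [hγdef]; linarith
  have hγ1 : γ ≤ 1 := by
    have := min_le_right β (1/4)
    rw [hγdef]; linarith
  obtain ⟨K, hKpos, hL⟩ := myLog_envelope β hβ
  set Cd := (d.factorial : ℝ) * 2 ^ (d-1) + Real.sqrt (2*d) ^ (d-1) with hCddef
  have hCdpos : 0 < Cd := by
    rw [hCddef]
    have h1 : (0:ℝ) < (d.factorial : ℝ) * 2 ^ (d-1) := by positivity
    have h2 : (0:ℝ) ≤ Real.sqrt (2*d) ^ (d-1) := by positivity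
    linarith
  set g : ℝ → ℝ := fun u => u ^ (γ-1) * (1-u) ^ (-(3/4) : ℝ) with hgdef
  have hgint : IntegrableOn g (Ioo 0 1) := myIntegrable γ hγ0 hγ1
  set Ig := ∫ u in Ioo (0:ℝ) 1, g u with hIgdef
  have hIg : 0 ≤ Ig := by
    rw [hIgdef]
    apply setIntegral_nonneg measurableSet_Ioo
    intro u hu
    exact mul_nonneg (Real.rpow_nonneg hu.1.le _) (Real.rpow_nonneg (by linarith [hu.2] : (0:ℝ) ≤ 1 - u) _)
  refine ⟨K * Cd * Ig + 1, by positivity, fun x y hxy hxyd => ?_⟩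
  have ha : 0 < ‖x - y‖ := by rw [norm_pos_iff]; exact sub_ne_zero.mpr hxy
  have hb : 0 ≤ ‖x‖ := norm_nonneg x
  have hadm : (0:ℝ) < ‖x - y‖ ^ (d-1) := pow_pos ha _
  have key : termI d β x y ≤
      ∫ u in Ioo (0:ℝ) 1, (K * Cd * (‖x‖ / ‖x - y‖ ^ (d-1))) * g u := by
    rw [termI]
    apply integral_mono_of_nonneg
    · rw [Filter.EventuallyLE, ae_restrict_iff' measurableSet_Ioo]
      filter_upwards with u hu
      have hu0 := hu.1
      have h1u : (0:ℝ) < 1 - u := by linarith [hu.2]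
      have hLnn : 0 ≤ -Real.log (Real.sqrt (1-u)) := by
        have := Real.log_nonpos (Real.sqrt_nonneg (1-u)) (Real.sqrt_le_one.mpr (by linarith))
        linarith
      have h1 : 0 ≤ (-Real.log (Real.sqrt (1-u))) ^ (β/2) := Real.rpow_nonneg hLnn _
      have h2 : 0 ≤ u ^ (-((d:ℝ)/2 + 1)) := Real.rpow_nonneg hu0.le _
      have h3 : 0 ≤ (1-u) ^ (-(1:ℝ)/2) := Real.rpow_nonneg h1u.le _
      exact mul_nonneg (mul_nonneg (mul_nonneg h1 h2) (Real.exp_nonneg _))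
        (mul_nonneg (mul_nonneg (norm_nonneg _) (norm_nonneg _)) h3)
    · exact hgint.const_mul _
    · rw [Filter.EventuallyLE, ae_restrict_iff' measurableSet_Ioo]
      filter_upwards with u hu
      have hu0 := hu.1
      have h1u : (0:ℝ) < 1 - u := by linarith [hu.2]
      set s := Real.sqrt (1-u) with hsdef
      have hs1 : s ≤ 1 := Real.sqrt_le_one.mpr (by linarith)
      have hs2 : s ^ 2 = 1 - u := Real.sq_sqrt h1u.le
      have hsnn : 0 ≤ s := Real.sqrt_nonneg _
      have hsge : 1 - u ≤ s := by nlinarith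
      have hdecomp : y - x = (y - s • x) + (s - 1) • x := by
        rw [sub_smul, one_smul]; abel
      have htri : ‖x - y‖ ≤ ‖y - s • x‖ + u * ‖x‖ := by
        calc ‖x - y‖ = ‖y - x‖ := norm_sub_rev x y
          _ = ‖(y - s • x) + (s - 1) • x‖ := by rw [← hdecomp]
          _ ≤ ‖y - s • x‖ + ‖(s - 1) • x‖ := norm_add_le _ _
          _ = ‖y - s • x‖ + (1 - s) * ‖x‖ := by
              rw [norm_smul, Real.norm_eq_abs, abs_of_nonpos (by linarith)]; ring_nf
          _ ≤ ‖y - s • x‖ + u * ‖x‖ := by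
              apply add_le_add_right
              exact mul_le_mul_of_nonneg_right (by linarith) (norm_nonneg x)
      exact myPointwise d hd β γ K hKpos.le hL hu (norm_nonneg _) ha hb htri hxyd
  calc termI d β x y ≤ ∫ u in Ioo (0:ℝ) 1, (K * Cd * (‖x‖ / ‖x - y‖ ^ (d-1))) * g u := key
    _ = (K * Cd * (‖x‖ / ‖x - y‖ ^ (d-1))) * Ig := by
        rw [hIgdef]; exact MeasureTheory.integral_const_mul _ _
    _ = (K * Cd * Ig) * ‖x‖ / ‖x - y‖ ^ (d-1) := by ring
    _ ≤ (K * Cd * Ig + 1) * ‖x‖ / ‖x - y‖ ^ (d-1) := by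
        gcongr
        linarith
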